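/- arXiv:2507.09373 — 2 statements merged into one kernel-verified Lean document; each statement's English description precedes it below -/
import Mathlib

section
/- Let Σ = {a,b} and let φ : Σ* → M₂(ℚ) be the monoid morphism with φ(a) = [[1,1],[0,1]] and φ(b) = [[1,0],[1,1]], and let ω : Σ* → ℤ be the monoid morphism with ω(a) = 1 and ω(b) = −1. Then the Zariski closure of φ(L_R(ω)) in M₂(ℚ̄) equals SL₂(ℚ̄) = {A ∈ M₂(ℚ̄) : det(A) = 1}; equivalently, the vanishing ideal of φ(L_R(ω)) in ℚ̄[x₁₁,x₁₂,x₂₁,x₂₂] is the principal ideal generated by x₁₁x₂₂ − x₁₂x₂₁ − 1. -/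
noncomputable section

/-- The algebraic closure of `ℚ`. -/
abbrev Qbar : Type := AlgebraicClosure ℚ

/-- View a rational matrix inside `M₂(ℚ̄)`. -/
def liftMat (M : Matrix (Fin 2) (Fin 2) ℚ) : Matrix (Fin 2) (Fin 2) Qbar :=
  M.map (algebraMap ℚ Qbar)

/-- The Zariski closure of a set of `2 × 2` matrices over `ℚ̄`, identified with affine
space `ℚ̄⁴`: the common zero set of all polynomials vanishing on the set. -/
def matZClosure (S : Set (Matrix (Fin 2) (Fin 2) Qbar)) :
    Set (Matrix (Fin 2) (Fin 2) Qbar) :=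
  {A | ∀ p : MvPolynomial (Fin 2 × Fin 2) Qbar,
      (∀ B ∈ S, MvPolynomial.eval (fun ij => B ij.1 ij.2) p = 0) →
      MvPolynomial.eval (fun ij => A ij.1 ij.2) p = 0}

/-- The alphabet `Σ = {a, b}` encoded as `Bool`: `true ↦ a`, `false ↦ b`. -/
def phiLetter : Bool → Matrix (Fin 2) (Fin 2) ℚ
  | true => !![1, 1; 0, 1]
  | false => !![1, 0; 1, 1]

/-- The morphism `φ : Σ* → M₂(ℚ)` with `φ(a) = [[1,1],[0,1]]`, `φ(b) = [[1,0],[1,1]]`. -/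
def phi (w : List Bool) : Matrix (Fin 2) (Fin 2) ℚ :=
  (w.map phiLetter).prod

/-- The morphism `ω : Σ* → ℤ` with `ω(a) = 1` and `ω(b) = -1`. -/
def omega (w : List Bool) : ℤ :=
  (w.map fun σ => if σ then (1 : ℤ) else -1).sum

/-- The reachability language of `ω` (here: the Dyck language): words of weight zero
all of whose prefixes have nonnegative weight. -/
def reachLang : Set (List Bool) :=
  {w | omega w = 0 ∧ ∀ u : List Bool, u <+: w → 0 ≤ omega u}

/-! ### Auxiliary lemmas -/

lemma omega_append' (u v : List Bool) : omega (u ++ v) = omega u + omega v := by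
  simp [omega]

lemma omega_replicate_true' (m : ℕ) : omega (List.replicate m true) = m := by
  simp [omega, List.map_replicate, List.sum_replicate]

lemma omega_replicate_false' (m : ℕ) : omega (List.replicate m false) = -m := by
  simp [omega, List.map_replicate, List.sum_replicate]

lemma phi_append' (u v : List Bool) : phi (u ++ v) = phi u * phi v := by
  simp [phi]

lemma phi_cons' (σ : Bool) (w : List Bool) : phi (σ :: w) = phiLetter σ * phi w := by
  simp [phi]

lemma phi_replicate_true' (m : ℕ) : phi (List.replicate m true) = !![1, (m:ℚ); 0, 1] := by
  induction m with
  | zero =>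
    ext i j
    fin_cases i <;> fin_cases j <;> simp [phi]
  | succ n ih =>
    rw [List.replicate_succ, phi_cons', ih]
    ext i j
    fin_cases i <;> fin_cases j <;>
      simp [phiLetter, Matrix.mul_apply, Fin.sum_univ_two] <;> push_cast <;> ring

lemma phi_replicate_false' (m : ℕ) : phi (List.replicate m false) = !![1, 0; (m:ℚ), 1] := by
  induction m with
  | zero =>
    ext i j
    fin_cases i <;> fin_cases j <;> simp [phi]
  | succ n ih =>
    rw [List.replicate_succ, phi_cons', ih]
    ext i j
    fin_cases i <;> fin_cases j <;>
      simp [phiLetter, Matrix.mul_apply, Fin.sum_univ_two] <;> push_cast <;> ring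

/-- The Dyck word `aᵐ bⁿ aᵏ b^(m-n+k)` (for `n ≤ m`). -/
def dyckWord' (m n k : ℕ) : List Bool :=
  List.replicate m true ++ List.replicate n false ++ List.replicate k true
    ++ List.replicate (m - n + k) false

lemma dyckWord_mem' {m n k : ℕ} (h : n ≤ m) : dyckWord' m n k ∈ reachLang := by
  constructor
  · simp [dyckWord', omega_append', omega_replicate_true', omega_replicate_false']
    omega
  · intro u hu
    rw [List.prefix_iff_eq_take.mp hu]
    generalize u.length = i
    simp [dyckWord', List.take_append, List.take_replicate,
      omega_append', omega_replicate_true', omega_replicate_false']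
    omega

lemma det_phi' (w : List Bool) :
    phi w 0 0 * phi w 1 1 - phi w 0 1 * phi w 1 0 = 1 := by
  induction w with
  | nil => simp [phi]
  | cons σ w ih =>
    cases σ <;>
      simp [phi_cons', phiLetter, Matrix.mul_apply, Fin.sum_univ_two] <;>
      linear_combination ih

/-- The matrix `U(x) L(y) U(z) L(x+z-y)`, where `U(x) = [[1,x],[0,1]]` and
`L(y) = [[1,0],[y,1]]`. -/
def Emat {R : Type*} [CommRing R] (x y z : R) : Matrix (Fin 2) (Fin 2) R :=
  !![1 + x*y + (x+z-y)*(z + x + x*y*z), z + x + x*y*z;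
     y + (x+z-y)*(1 + y*z), 1 + y*z]

lemma Emat_eq' {R : Type*} [CommRing R] (x y z : R) :
    !![1,x;0,1] * !![1,0;y,1] * !![1,z;0,1] * !![1,0;x+z-y,1] = Emat x y z := by
  ext i j
  fin_cases i <;> fin_cases j <;>
    simp [Emat, Matrix.mul_apply, Fin.sum_univ_two] <;> ring

lemma Emat_eval' (x y z : Polynomial Qbar) (t : Qbar) (ij : Fin 2 × Fin 2) :
    (Emat x y z ij.1 ij.2).eval t = Emat (x.eval t) (y.eval t) (z.eval t) ij.1 ij.2 := by
  obtain ⟨i, j⟩ := ij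
  fin_cases i <;> fin_cases j <;> simp [Emat]

lemma liftMat_mul' (M N : Matrix (Fin 2) (Fin 2) ℚ) :
    liftMat (M * N) = liftMat M * liftMat N :=
  Matrix.map_mul

lemma lift_prod' (m n k : ℕ) (h : n ≤ m) :
    liftMat (!![1,(m:ℚ);0,1] * !![1,0;(n:ℚ),1] * (!![1,(k:ℚ);0,1] * !![1,0;((m-n+k : ℕ):ℚ),1]))
      = Emat (m:Qbar) (n:Qbar) (k:Qbar) := by
  rw [← mul_assoc, liftMat_mul', liftMat_mul', liftMat_mul', ← Emat_eq']
  have e1 : ∀ q : ℚ, liftMat !![1,q;0,1] = !![1, algebraMap ℚ Qbar q; 0, 1] := by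
    intro q; ext i j; fin_cases i <;> fin_cases j <;> simp [liftMat]
  have e2 : ∀ q : ℚ, liftMat !![1,0;q,1] = !![1, 0; algebraMap ℚ Qbar q, 1] := by
    intro q; ext i j; fin_cases i <;> fin_cases j <;> simp [liftMat]
  rw [e1, e2, e1, e2]
  have : ((m - n + k : ℕ) : ℚ) = (m : ℚ) + k - n := by
    push_cast [h]; ring
  rw [this]
  simp [map_natCast]

lemma eval_nat' (p : MvPolynomial (Fin 2 × Fin 2) Qbar)
    (hp : ∀ B ∈ ((fun w => liftMat (phi w)) '' reachLang),
      MvPolynomial.eval (fun ij => B ij.1 ij.2) p = 0)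
    {m n k : ℕ} (h : n ≤ m) :
    MvPolynomial.eval (fun ij => Emat (m:Qbar) (n:Qbar) (k:Qbar) ij.1 ij.2) p = 0 := by
  have hmem : liftMat (phi (dyckWord' m n k)) ∈ ((fun w => liftMat (phi w)) '' reachLang) :=
    ⟨_, dyckWord_mem' h, rfl⟩
  have hEq : liftMat (phi (dyckWord' m n k)) = Emat (m:Qbar) (n:Qbar) (k:Qbar) := by
    rw [dyckWord', phi_append', phi_append', phi_append', phi_replicate_true',
      phi_replicate_false', phi_replicate_true', phi_replicate_false',
      mul_assoc (!![1,(m:ℚ);0,1] * !![1,0;(n:ℚ),1])]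
    exact lift_prod' m n k h
  have := hp _ hmem
  rwa [hEq] at this

lemma eval_comp' (p : MvPolynomial (Fin 2 × Fin 2) Qbar)
    (f : Fin 2 × Fin 2 → Polynomial Qbar) (t : Qbar) :
    Polynomial.eval t (MvPolynomial.aeval f p)
      = MvPolynomial.eval (fun ij => (f ij).eval t) p := by
  induction p using MvPolynomial.induction_on with
  | C a => simp [MvPolynomial.algebraMap_eq]
  | add p q hp hq => simp [hp, hq]
  | mul_X p i hp => simp [hp]

lemma extend_step' (p : MvPolynomial (Fin 2 × Fin 2) Qbar)
    (f : Fin 2 × Fin 2 → Polynomial Qbar) (T : Set Qbar) (hT : T.Infinite)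
    (h : ∀ t ∈ T, MvPolynomial.eval (fun ij => (f ij).eval t) p = 0) (t : Qbar) :
    MvPolynomial.eval (fun ij => (f ij).eval t) p = 0 := by
  rw [← eval_comp']
  have hz : MvPolynomial.aeval f p = 0 := by
    apply Polynomial.eq_zero_of_infinite_isRoot
    apply hT.mono
    intro s hs
    simp only [Set.mem_setOf_eq, Polynomial.IsRoot, eval_comp']
    exact h s hs
  rw [hz]; simp

lemma eval_all' (p : MvPolynomial (Fin 2 × Fin 2) Qbar)
    (hnat : ∀ {m n k : ℕ}, n ≤ m →
      MvPolynomial.eval (fun ij => Emat (m:Qbar) (n:Qbar) (k:Qbar) ij.1 ij.2) p = 0)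
    (x y z : Qbar) :
    MvPolynomial.eval (fun ij => Emat x y z ij.1 ij.2) p = 0 := by
  have hinj : Function.Injective (fun m : ℕ => (m : Qbar)) := Nat.cast_injective
  have h1 : ∀ (n k : ℕ) (x : Qbar),
      MvPolynomial.eval (fun ij => Emat x (n:Qbar) (k:Qbar) ij.1 ij.2) p = 0 := by
    intro n k x
    have := extend_step' p
      (fun ij => Emat (Polynomial.X) (Polynomial.C (n:Qbar)) (Polynomial.C (k:Qbar)) ij.1 ij.2)
      ((fun m : ℕ => (m : Qbar)) '' Set.Ici n)
      ((Set.Ici_infinite n).image (Set.injOn_of_injective hinj))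
      (by
        rintro t ⟨m, hm, rfl⟩
        simpa [Emat_eval'] using hnat hm)
      x
    simpa [Emat_eval'] using this
  have h2 : ∀ (k : ℕ) (x y : Qbar),
      MvPolynomial.eval (fun ij => Emat x y (k:Qbar) ij.1 ij.2) p = 0 := by
    intro k x y
    have := extend_step' p
      (fun ij => Emat (Polynomial.C x) (Polynomial.X) (Polynomial.C (k:Qbar)) ij.1 ij.2)
      (Set.range (fun m : ℕ => (m : Qbar)))
      (Set.infinite_range_of_injective hinj)
      (by
        rintro t ⟨m, rfl⟩
        simpa [Emat_eval'] using h1 m k x)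
      y
    simpa [Emat_eval'] using this
  have := extend_step' p
    (fun ij => Emat (Polynomial.C x) (Polynomial.C y) (Polynomial.X) ij.1 ij.2)
    (Set.range (fun m : ℕ => (m : Qbar)))
    (Set.infinite_range_of_injective hinj)
    (by
      rintro t ⟨m, rfl⟩
      simpa [Emat_eval'] using h2 m x y)
    z
  simpa [Emat_eval'] using this

set_option maxHeartbeats 1000000 in
lemma solve_generic' (p : MvPolynomial (Fin 2 × Fin 2) Qbar)
    (hE : ∀ x y z : Qbar, MvPolynomial.eval (fun ij => Emat x y z ij.1 ij.2) p = 0)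
    (a b c d : Qbar) (hdet : a * d - b * c = 1) (hd0 : d ≠ 0) (hd1 : d ≠ 1) :
    MvPolynomial.eval
      (fun ij => (!![a,b;c,d] : Matrix (Fin 2) (Fin 2) Qbar) ij.1 ij.2) p = 0 := by
  have h1d : (1 : Qbar) - d ≠ 0 := sub_ne_zero.mpr (Ne.symm hd1)
  set s : Qbar := (c - b * d) / (1 - d) with hs_def
  have hs : s * (1 - d) = c - b * d := div_mul_cancel₀ _ h1d
  obtain ⟨x, hx⟩ : ∃ x : Qbar, d^2*x^2 - d*(s+b)*x + (s*b - d + 1) = 0 := by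
    obtain ⟨x, hx⟩ := IsAlgClosed.exists_root
      (Polynomial.C (d^2) * Polynomial.X^2 + Polynomial.C (-(d*(s+b))) * Polynomial.X
        + Polynomial.C (s*b - d + 1))
      (by rw [Polynomial.degree_quadratic (pow_ne_zero 2 hd0)]; decide)
    refine ⟨x, ?_⟩
    have := hx
    simp only [Polynomial.IsRoot, Polynomial.eval_add, Polynomial.eval_mul,
      Polynomial.eval_pow, Polynomial.eval_C, Polynomial.eval_X] at this
    linear_combination this
  have h11 : 1 + (s - x*d)*(b - x*d) = d := by linear_combination hx
  have h01 : (b - x*d) + x + x*((s - x*d)*(b - x*d)) = b := by linear_combination x*hx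
  have h10 : (s - x*d) + (x + (b - x*d) - (s - x*d))*(1 + (s - x*d)*(b - x*d)) = c := by
    linear_combination hs + (x + b - s)*hx
  have hdetE : (1 + x*(s - x*d) + (x + (b - x*d) - (s - x*d))*((b - x*d) + x + x*((s - x*d)*(b - x*d)))) * (1 + (s - x*d)*(b - x*d))
      - ((b - x*d) + x + x*((s - x*d)*(b - x*d))) * ((s - x*d) + (x + (b - x*d) - (s - x*d))*(1 + (s - x*d)*(b - x*d))) = 1 := by
    ring
  rw [h10, h01, h11] at hdetE
  have h00d : (1 + x*(s - x*d) + (x + (b - x*d) - (s - x*d))*b) * d = a * d := by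
    linear_combination hdetE - hdet
  have h00 : 1 + x*(s - x*d) + (x + (b - x*d) - (s - x*d))*b = a :=
    mul_right_cancel₀ hd0 h00d
  have hfun : (fun ij : Fin 2 × Fin 2 => (!![a,b;c,d] : Matrix (Fin 2) (Fin 2) Qbar) ij.1 ij.2)
      = (fun ij => Emat x (s - x*d) (b - x*d) ij.1 ij.2) := by
    funext ij
    obtain ⟨i, j⟩ := ij
    fin_cases i <;> fin_cases j <;> simp [Emat]
    · linear_combination (-1 : Qbar)*h00 - (x + (b - x*d) - (s - x*d))*h01
    · linear_combination (-1 : Qbar)*h01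
    · linear_combination (-1 : Qbar)*h10
    · linear_combination (-1 : Qbar)*h11
  rw [hfun]
  exact hE x (s - x*d) (b - x*d)

set_option maxHeartbeats 1000000 in
lemma solve_all' (p : MvPolynomial (Fin 2 × Fin 2) Qbar)
    (hE : ∀ x y z : Qbar, MvPolynomial.eval (fun ij => Emat x y z ij.1 ij.2) p = 0)
    (A : Matrix (Fin 2) (Fin 2) Qbar) (hdet : A 0 0 * A 1 1 - A 0 1 * A 1 0 = 1) :
    MvPolynomial.eval (fun ij => A ij.1 ij.2) p = 0 := by
  obtain ⟨a, b, c, d, ha, hb, hc, hd⟩ :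
      ∃ a b c d : Qbar, A 0 0 = a ∧ A 0 1 = b ∧ A 1 0 = c ∧ A 1 1 = d :=
    ⟨_, _, _, _, rfl, rfl, rfl, rfl⟩
  rw [ha, hb, hc, hd] at hdet
  have hcd : ¬(c = 0 ∧ d = 0) := by
    rintro ⟨h1, h2⟩
    rw [h1, h2] at hdet
    simp at hdet
  set f : Fin 2 × Fin 2 → Polynomial Qbar := fun ij =>
    (!![Polynomial.C a + Polynomial.C b * Polynomial.X,
        Polynomial.C a * Polynomial.X + Polynomial.C b + Polynomial.C b * Polynomial.X^2;
        Polynomial.C c + Polynomial.C d * Polynomial.X,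
        Polynomial.C c * Polynomial.X + Polynomial.C d + Polynomial.C d * Polynomial.X^2]
      : Matrix (Fin 2) (Fin 2) (Polynomial Qbar)) ij.1 ij.2 with hf
  set T : Set Qbar := {t : Qbar | c*t + d + d*t^2 ≠ 0 ∧ c*t + d + d*t^2 ≠ 1} with hT_def
  have hq0 : (Polynomial.C d * Polynomial.X^2 + Polynomial.C c * Polynomial.X
      + Polynomial.C d : Polynomial Qbar) ≠ 0 := by
    intro h0
    apply hcd
    constructor
    · have := congrArg (fun q => Polynomial.coeff q 1) h0
      simpa using this
    · have := congrArg (fun q => Polynomial.coeff q 0) h0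
      simpa using this
  have hq1 : (Polynomial.C d * Polynomial.X^2 + Polynomial.C c * Polynomial.X
      + Polynomial.C (d - 1) : Polynomial Qbar) ≠ 0 := by
    intro h0
    apply hcd
    constructor
    · have := congrArg (fun q => Polynomial.coeff q 1) h0
      simpa [Polynomial.coeff_one] using this
    · have := congrArg (fun q => Polynomial.coeff q 2) h0
      simpa [Polynomial.coeff_one] using this
  have hT : T.Infinite := by
    have hsub : Tᶜ ⊆ {t : Qbar | Polynomial.IsRoot (Polynomial.C d * Polynomial.X^2
          + Polynomial.C c * Polynomial.X + Polynomial.C d) t}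
        ∪ {t : Qbar | Polynomial.IsRoot (Polynomial.C d * Polynomial.X^2
          + Polynomial.C c * Polynomial.X + Polynomial.C (d - 1)) t} := by
      intro t ht
      simp only [hT_def, Set.mem_compl_iff, Set.mem_setOf_eq, not_and_or, not_not] at ht
      rcases ht with h | h
      · left
        simp only [Set.mem_setOf_eq, Polynomial.IsRoot, Polynomial.eval_add,
          Polynomial.eval_mul, Polynomial.eval_pow, Polynomial.eval_C, Polynomial.eval_X]
        linear_combination h
      · right
        simp only [Set.mem_setOf_eq, Polynomial.IsRoot, Polynomial.eval_add,
          Polynomial.eval_mul, Polynomial.eval_pow, Polynomial.eval_C, Polynomial.eval_X]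
        linear_combination h
    have hfin : (Tᶜ).Finite :=
      Set.Finite.subset ((Polynomial.finite_setOf_isRoot hq0).union
        (Polynomial.finite_setOf_isRoot hq1)) hsub
    have := hfin.infinite_compl
    rwa [compl_compl] at this
  have hvan : ∀ t ∈ T, MvPolynomial.eval (fun ij => (f ij).eval t) p = 0 := by
    intro t ht
    obtain ⟨ht0, ht1⟩ := ht
    have hg := solve_generic' p hE (a + b*t) (a*t + b + b*t^2) (c + d*t) (c*t + d + d*t^2)
      (by linear_combination hdet) ht0 ht1
    have hfeq : (fun ij : Fin 2 × Fin 2 => (f ij).eval t)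
        = (fun ij => (!![a + b*t, a*t + b + b*t^2; c + d*t, c*t + d + d*t^2]
            : Matrix (Fin 2) (Fin 2) Qbar) ij.1 ij.2) := by
      funext ij
      obtain ⟨i, j⟩ := ij
      fin_cases i <;> fin_cases j <;> simp [hf]
    rw [hfeq]
    exact hg
  have := extend_step' p f T hT hvan 0
  have hfeq0 : (fun ij : Fin 2 × Fin 2 => (f ij).eval 0) = (fun ij => A ij.1 ij.2) := by
    funext ij
    obtain ⟨i, j⟩ := ij
    fin_cases i <;> fin_cases j <;> simp [hf, ha, hb, hc, hd]
  rwa [hfeq0] at this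

/-- For the Dyck language `L_R(ω)` over `{a,b}` with `φ(a) = [[1,1],[0,1]]` and
`φ(b) = [[1,0],[1,1]]`, the Zariski closure of `φ(L_R(ω))` in `M₂(ℚ̄)` is the special
linear group `SL₂(ℚ̄) = {A : det A = 1}`. -/
theorem dyck_closure_eq_SL2 :
    matZClosure ((fun w => liftMat (phi w)) '' reachLang) =
      {A : Matrix (Fin 2) (Fin 2) Qbar | A 0 0 * A 1 1 - A 0 1 * A 1 0 = 1} := by
  ext A
  constructor
  · intro hA
    have hvan : ∀ B ∈ ((fun w => liftMat (phi w)) '' reachLang),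
        MvPolynomial.eval (fun ij => B ij.1 ij.2)
          (MvPolynomial.X ((0 : Fin 2), (0 : Fin 2)) * MvPolynomial.X (1, 1)
            - MvPolynomial.X (0, 1) * MvPolynomial.X (1, 0) - 1) = 0 := by
      rintro B ⟨w, hw, rfl⟩
      have hw2 := det_phi' w
      have : algebraMap ℚ Qbar (phi w 0 0 * phi w 1 1 - phi w 0 1 * phi w 1 0)
          = algebraMap ℚ Qbar 1 := by rw [hw2]
      simp only [map_sub, map_mul, map_one] at this
      simp only [MvPolynomial.eval_sub, MvPolynomial.eval_mul, MvPolynomial.eval_X,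
        map_one, liftMat, Matrix.map_apply]
      linear_combination this
    have := hA _ hvan
    simp only [MvPolynomial.eval_sub, MvPolynomial.eval_mul, MvPolynomial.eval_X,
      map_one] at this
    simp only [Set.mem_setOf_eq]
    linear_combination this
  · intro hA p hp
    exact solve_all' p (eval_all' p (fun {m n k} h => eval_nat' p hp h)) A hA

end
end

section
/- The Zariski closure in M₂(ℚ̄) of the multiplicative monoid generated by the matrices [[2,0],[0,4]] and [[1,0],[1,1]] equals the set {[[x,0],[y,x²]] : x, y ∈ ℚ̄}; equivalently, the vanishing ideal of this monoid in ℚ̄[x₁₁,x₁₂,x₂₁,x₂₂] is generated by x₁₂ and x₁₁² − x₂₂. -/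
/-!
Both generators, and hence the whole monoid, lie in the monoid of matrices `[[x, 0], [y, x²]]`,
which is cut out by `x₁₂` and `x₁₁² − x₂₂`. Conversely the monoid contains
`[[1, 0], [1, 1]]^m [[2, 0], [0, 4]]^n = [[2ⁿ, 0], [m 2ⁿ, 4ⁿ]]`. A polynomial vanishing on
the monoid, pulled back along `(x, y) ↦ [[x, 0], [y, x²]]`, therefore vanishes at `(2ⁿ, m 2ⁿ)`
for all `n, m`: for each fixed `x = 2ⁿ` it has infinitely many roots in `y`, so each of its
coefficients, a polynomial in `x`, has the infinitely many roots `2ⁿ`.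
-/

noncomputable section

open Polynomial

namespace Polynomial

variable {K : Type*} [CommRing K] [IsDomain K]

theorem eq_zero_of_forall_map_evalRingHom_eq_zero {q : K[X][X]} {s : Set K} (hs : s.Infinite)
    (h : ∀ x ∈ s, q.map (evalRingHom x) = 0) : q = 0 := by
  ext1 i
  refine eq_zero_of_infinite_isRoot _ (hs.mono fun x hx => ?_)
  simpa [coeff_map] using congr_arg (coeff · i) (h x hx)

theorem eq_zero_of_eval_map_evalRingHom_eq_zero {q : K[X][X]} {s : Set K} (hs : s.Infinite)
    {t : K → Set K} (ht : ∀ x ∈ s, (t x).Infinite)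
    (h : ∀ x ∈ s, ∀ y ∈ t x, (q.map (evalRingHom x)).eval y = 0) : q = 0 :=
  eq_zero_of_forall_map_evalRingHom_eq_zero hs fun x hx =>
    eq_zero_of_infinite_isRoot _ ((ht x hx).mono (h x hx))

end Polynomial

namespace Matrix

variable {R : Type*} [CommRing R]

variable (R) in
def squareLowerMonoid : Submonoid (Matrix (Fin 2) (Fin 2) R) where
  carrier := {A | A 0 1 = 0 ∧ A 0 0 ^ 2 = A 1 1}
  mul_mem' := by
    rintro A B ⟨hA01, hA⟩ ⟨hB01, hB⟩
    refine ⟨by simp [mul_apply, hA01, hB01], ?_⟩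
    simp only [mul_apply, Fin.sum_univ_two, hA01, hB01, zero_mul, mul_zero, add_zero, zero_add,
      ← hA, ← hB]
    ring
  one_mem' := by simp

theorem eq_of_mem_squareLowerMonoid {A : Matrix (Fin 2) (Fin 2) R}
    (hA : A ∈ squareLowerMonoid R) : A = !![A 0 0, 0; A 1 0, A 0 0 ^ 2] := by
  ext i j
  fin_cases i <;> fin_cases j <;> simp [hA.1, hA.2]

theorem fin_two_lowerUnipotent_pow (m : ℕ) :
    (!![1, 0; 1, 1] : Matrix (Fin 2) (Fin 2) R) ^ m = !![1, 0; (m : R), 1] := by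
  induction m with
  | zero => simp [one_fin_two]
  | succ m ih =>
    rw [pow_succ, ih]
    ext i j
    fin_cases i <;> fin_cases j <;> simp [mul_apply]

theorem fin_two_diagonal_pow (a b : R) (n : ℕ) :
    (!![a, 0; 0, b] : Matrix (Fin 2) (Fin 2) R) ^ n = !![a ^ n, 0; 0, b ^ n] := by
  induction n with
  | zero => simp [one_fin_two]
  | succ n ih =>
    rw [pow_succ, ih]
    ext i j
    fin_cases i <;> fin_cases j <;> simp [mul_apply, pow_succ]

end Matrix

open Matrix

theorem closure_le_squareLowerMonoid (R : Type*) [CommRing R] :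
    Submonoid.closure {!![2, 0; 0, 4], !![1, 0; 1, 1]} ≤ squareLowerMonoid R := by
  rw [Submonoid.closure_le]
  rintro A (rfl | rfl) <;> constructor <;> norm_num

theorem mem_closure_of_nat (R : Type*) [CommRing R] (n m : ℕ) :
    !![(2 : R) ^ n, 0; m * 2 ^ n, (2 ^ n) ^ 2] ∈
      Submonoid.closure {!![2, 0; 0, 4], !![1, 0; 1, 1]} := by
  have hD : !![(2 : R), 0; 0, 4] ∈ Submonoid.closure {!![2, 0; 0, 4], !![1, 0; 1, 1]} :=
    Submonoid.subset_closure (by simp)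
  have hU : !![(1 : R), 0; 1, 1] ∈ Submonoid.closure {!![2, 0; 0, 4], !![1, 0; 1, 1]} :=
    Submonoid.subset_closure (by simp)
  convert mul_mem (pow_mem hU m) (pow_mem hD n) using 1
  rw [fin_two_lowerUnipotent_pow, fin_two_diagonal_pow, show (4 : R) ^ n = (2 ^ n) ^ 2 by
    rw [← pow_mul, mul_comm, pow_mul]; norm_num]
  ext i j
  fin_cases i <;> fin_cases j <;> simp [mul_apply, mul_comm]

theorem image_liftMat_closure :
    liftMat '' (Submonoid.closure {!![2, 0; 0, 4], !![1, 0; 1, 1]} :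
      Submonoid (Matrix (Fin 2) (Fin 2) ℚ)) =
      (Submonoid.closure {!![2, 0; 0, 4], !![1, 0; 1, 1]} :
        Submonoid (Matrix (Fin 2) (Fin 2) Qbar)) := by
  have hgen : ((algebraMap ℚ Qbar).mapMatrix : Matrix (Fin 2) (Fin 2) ℚ →+* _) ''
      {!![2, 0; 0, 4], !![1, 0; 1, 1]} = {!![2, 0; 0, 4], !![1, 0; 1, 1]} := by
    rw [Set.image_pair]
    congr! <;> ext i j <;> fin_cases i <;> fin_cases j <;> simp
  exact congrArg SetLike.coe ((MonoidHom.map_mclosure _ _).trans (congrArg _ hgen))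

theorem matZClosure_subset_squareLowerMonoid {S : Set (Matrix (Fin 2) (Fin 2) Qbar)}
    (hS : S ⊆ squareLowerMonoid Qbar) : matZClosure S ⊆ squareLowerMonoid Qbar := by
  intro A hA
  have h01 := hA (MvPolynomial.X (0, 1)) fun B hB => by simpa using (hS hB).1
  have h2 := hA (MvPolynomial.X (0, 0) ^ 2 - MvPolynomial.X (1, 1)) fun B hB => by
    simpa [sub_eq_zero] using (hS hB).2
  exact ⟨by simpa using h01, by simpa [sub_eq_zero] using h2⟩

section Parametrization

variable {K : Type*} [CommRing K]

variable (K) in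
/-- The generic point `[[x, 0], [y, x²]]`, with `x` the variable of the coefficient ring `K[X]`
and `y` the outer variable. -/
def squareLowerParam : Fin 2 × Fin 2 → K[X][X] :=
  fun ij => !![C X, 0; X, C X ^ 2] ij.1 ij.2

theorem eval_map_evalRingHom_aeval_squareLowerParam (p : MvPolynomial (Fin 2 × Fin 2) K)
    (a b : K) :
    ((MvPolynomial.aeval (squareLowerParam K) p).map (evalRingHom a)).eval b =
      MvPolynomial.eval (fun ij => !![a, 0; b, a ^ 2] ij.1 ij.2) p := by
  induction p using MvPolynomial.induction_on with
  | C c => simp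
  | add p q hp hq => simp [hp, hq]
  | mul_X p ij hp =>
    obtain ⟨i, j⟩ := ij
    fin_cases i <;> fin_cases j <;> simp [squareLowerParam, hp]

theorem eval_eq_zero_of_mem_squareLowerMonoid [IsDomain K] [CharZero K]
    {p : MvPolynomial (Fin 2 × Fin 2) K}
    (hp : ∀ n m : ℕ,
      MvPolynomial.eval (fun ij => !![(2 : K) ^ n, 0; m * 2 ^ n, (2 ^ n) ^ 2] ij.1 ij.2) p = 0)
    {A : Matrix (Fin 2) (Fin 2) K} (hA : A ∈ squareLowerMonoid K) :
    MvPolynomial.eval (fun ij => A ij.1 ij.2) p = 0 := by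
  have hpow : Function.Injective (2 ^ · : ℕ → K) := fun n m h =>
    Nat.pow_right_injective le_rfl (Nat.cast_injective (R := K) (by simpa using h))
  have hq : MvPolynomial.aeval (squareLowerParam K) p = 0 := by
    refine eq_zero_of_eval_map_evalRingHom_eq_zero (Set.infinite_range_of_injective hpow)
      (t := fun x => Set.range fun m : ℕ => (m : K) * x) ?_ ?_
    · rintro _ ⟨n, rfl⟩
      exact Set.infinite_range_of_injective fun m m' h =>
        Nat.cast_injective (mul_right_cancel₀ (pow_ne_zero n two_ne_zero) h)
    · rintro _ ⟨n, rfl⟩ _ ⟨m, rfl⟩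
      rw [eval_map_evalRingHom_aeval_squareLowerParam]
      exact hp n m
  rw [eq_of_mem_squareLowerMonoid hA, ← eval_map_evalRingHom_aeval_squareLowerParam, hq]
  simp

end Parametrization

/-- The Zariski closure in `M₂(ℚ̄)` of the multiplicative monoid generated by
`[[2,0],[0,4]]` and `[[1,0],[1,1]]` is `{[[x,0],[y,x²]] : x, y ∈ ℚ̄}`, i.e. the zero
set of the polynomials `x₁₂` and `x₁₁² − x₂₂`. -/
theorem closure_of_monoid_example :
    matZClosure (liftMat ''
        (Submonoid.closure {!![2, 0; 0, 4], !![1, 0; 1, 1]} :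
          Submonoid (Matrix (Fin 2) (Fin 2) ℚ))) =
      {A : Matrix (Fin 2) (Fin 2) Qbar | A 0 1 = 0 ∧ A 0 0 ^ 2 = A 1 1} := by
  rw [image_liftMat_closure]
  refine subset_antisymm
    (matZClosure_subset_squareLowerMonoid (closure_le_squareLowerMonoid Qbar))
    fun A hA p hp => ?_
  exact eval_eq_zero_of_mem_squareLowerMonoid (fun n m => hp _ (mem_closure_of_nat Qbar n m)) hA

end
end
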